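/- For all l ∈ ℝ and s > 0, the LeCam-Vincze triangular divergence between a Cauchy density and the standard Cauchy density satisfies ∫_ℝ (p_{0,1}(x) - p_{l,s}(x))^2 / (p_{0,1}(x) + p_{l,s}(x)) dx = 2 - 4 * sqrt(s / (l^2 + s^2 + 2*s + 1)). -/

import Mathlib

open MeasureTheory Real

/-!
Since `(p - q) ^ 2 / (p + q) = p + q - 4 * (p * q / (p + q))`, the divergence of two densities is
`2 - 4 ∫ p q / (p + q)`. For Cauchy densities the harmonic-mean term `p q / (p + q)` is
`s₁ s₂ / (π Q)` with `Q = s₂ ((x - l₁)² + s₁²) + s₁ ((x - l₂)² + s₂²)`, a quadratic in `x` with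
leading coefficient `s₁ + s₂`; completing the square exhibits it as a constant multiple of another
Cauchy density, so its integral is that constant.
-/

noncomputable def cauchyPdf (l s x : ℝ) : ℝ := s / (Real.pi * (s ^ 2 + (x - l) ^ 2))

lemma cauchyPdf_eq_cauchyPDFReal (l : ℝ) {s : ℝ} (hs : 0 ≤ s) :
    cauchyPdf l s = ProbabilityTheory.cauchyPDFReal l s.toNNReal := by
  ext x
  rw [ProbabilityTheory.cauchyPDFReal_def, Real.coe_toNNReal s hs, cauchyPdf]
  field_simp
  ring

lemma integrable_cauchyPdf (l : ℝ) {s : ℝ} (hs : 0 ≤ s) : Integrable (cauchyPdf l s) := by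
  rw [cauchyPdf_eq_cauchyPDFReal l hs]
  exact ProbabilityTheory.integrable_cauchyPDFReal l

lemma integral_cauchyPdf (l : ℝ) {s : ℝ} (hs : 0 < s) : ∫ x, cauchyPdf l s x = 1 := by
  rw [cauchyPdf_eq_cauchyPDFReal l hs.le]
  exact ProbabilityTheory.integral_cauchyPDFReal_eq_one l (by simpa using hs)

lemma sq_sub_div_add_eq (p q : ℝ) (h : p + q ≠ 0) :
    (p - q) ^ 2 / (p + q) = p + q - 4 * (p * q / (p + q)) := by
  field_simp
  ring

lemma cauchyPdf_pos (l x : ℝ) {s : ℝ} (hs : 0 < s) : 0 < cauchyPdf l s x := by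
  unfold cauchyPdf
  positivity

lemma cauchyPdf_mul_div_add {l₁ l₂ s₁ s₂ : ℝ} (hs₁ : 0 < s₁) (hs₂ : 0 < s₂) (x : ℝ) :
    cauchyPdf l₁ s₁ x * cauchyPdf l₂ s₂ x / (cauchyPdf l₁ s₁ x + cauchyPdf l₂ s₂ x) =
      √(s₁ * s₂ / ((s₁ + s₂) ^ 2 + (l₁ - l₂) ^ 2)) *
        cauchyPdf ((s₂ * l₁ + s₁ * l₂) / (s₁ + s₂))
          (√(s₁ * s₂ * ((s₁ + s₂) ^ 2 + (l₁ - l₂) ^ 2)) / (s₁ + s₂)) x := by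
  set D := (s₁ + s₂) ^ 2 + (l₁ - l₂) ^ 2
  have hD : 0 < D := by positivity
  have hscale : √(s₁ * s₂ / D) * (√(s₁ * s₂ * D) / (s₁ + s₂)) = s₁ * s₂ / (s₁ + s₂) := by
    rw [mul_div_assoc', ← Real.sqrt_mul (by positivity),
      show s₁ * s₂ / D * (s₁ * s₂ * D) = (s₁ * s₂) ^ 2 by field_simp, Real.sqrt_sq (by positivity)]
  have hsq : (√(s₁ * s₂ * D) / (s₁ + s₂)) ^ 2 = s₁ * s₂ * D / (s₁ + s₂) ^ 2 := by
    rw [div_pow, Real.sq_sqrt (by positivity)]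
  conv_rhs => rw [cauchyPdf, mul_div_assoc', hscale, hsq]
  unfold cauchyPdf
  field_simp
  ring

theorem integral_sq_sub_div_add_cauchyPdf {l₁ l₂ s₁ s₂ : ℝ} (hs₁ : 0 < s₁) (hs₂ : 0 < s₂) :
    ∫ x, (cauchyPdf l₁ s₁ x - cauchyPdf l₂ s₂ x) ^ 2 / (cauchyPdf l₁ s₁ x + cauchyPdf l₂ s₂ x) =
      2 - 4 * √(s₁ * s₂ / ((s₁ + s₂) ^ 2 + (l₁ - l₂) ^ 2)) := by
  set c := √(s₁ * s₂ / ((s₁ + s₂) ^ 2 + (l₁ - l₂) ^ 2))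
  set t := (s₂ * l₁ + s₁ * l₂) / (s₁ + s₂)
  set γ := √(s₁ * s₂ * ((s₁ + s₂) ^ 2 + (l₁ - l₂) ^ 2)) / (s₁ + s₂)
  have hγ : 0 < γ := by positivity
  have hpointwise : ∀ x,
      (cauchyPdf l₁ s₁ x - cauchyPdf l₂ s₂ x) ^ 2 / (cauchyPdf l₁ s₁ x + cauchyPdf l₂ s₂ x) =
        cauchyPdf l₁ s₁ x + cauchyPdf l₂ s₂ x - 4 * c * cauchyPdf t γ x := fun x => by
    rw [sq_sub_div_add_eq _ _ (add_pos (cauchyPdf_pos l₁ x hs₁) (cauchyPdf_pos l₂ x hs₂)).ne',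
      cauchyPdf_mul_div_add hs₁ hs₂]
    ring
  simp_rw [hpointwise]
  have h₁ := integrable_cauchyPdf l₁ hs₁.le
  have h₂ := integrable_cauchyPdf l₂ hs₂.le
  rw [integral_sub (h₁.fun_add h₂) ((integrable_cauchyPdf t hγ.le).const_mul _),
    integral_add h₁ h₂,
    integral_const_mul, integral_cauchyPdf l₁ hs₁, integral_cauchyPdf l₂ hs₂, integral_cauchyPdf t hγ]
  ring

theorem lecam_vincze_cauchy (l s : ℝ) (hs : 0 < s) :
    ∫ x : ℝ, (cauchyPdf 0 1 x - cauchyPdf l s x) ^ 2 / (cauchyPdf 0 1 x + cauchyPdf l s x)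
      = 2 - 4 * Real.sqrt (s / (l ^ 2 + s ^ 2 + 2 * s + 1)) := by
  rw [integral_sq_sub_div_add_cauchyPdf one_pos hs]
  ring_nf
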